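/- In G(N,K,p) with all super-vertex sizes at most r, the probability that a fixed set A of m super-vertices forms a connected component is at most m^{m-2} (r² p)^{m-1} e^{-p m (N-m)}. -/

import Mathlib

/-!
If `A` is a component and `a ∈ A`, pointing every other vertex of `A` to a neighbour closer to `a`
gives a spanning tree of `A`, encoded by its parent map `f`. The event of the theorem is contained
in the union over such `f` of the events "the `m - 1` edges of `f` are present and the `m (N - m)`
edges leaving `A` are absent". By independence each of these has probability at most
`(r² p)^(m-1) e^(-p m (N-m))`, and the Prüfer code injects the parent maps rooted at `a` into
`A^(m-2)`, so there are at most `m^(m-2)` of them.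
-/

open MeasureTheory ProbabilityTheory Filter Real
open scoped ENNReal Classical

abbrev EdgeIdx (N : ℕ) := {q : Fin N × Fin N // q.1 < q.2}

/-- The law of the random graph `G(N,K,p)`: each potential edge between the `k`-th and
`l`-th super-vertices (of sizes `size k`, `size l`) is present independently with
probability `1-(1-p)^(size k * size l)`. -/
noncomputable def graphMeasure (N : ℕ) (size : Fin N → ℕ) (p : ℝ) :
    Measure (EdgeIdx N → Bool) :=
  Measure.pi fun e =>
    (PMF.bernoulli (1 - (1 - ENNReal.ofReal p) ^ (size e.1.1 * size e.1.2)).toNNReal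
      (by simp)).toMeasure

/-- Super-vertex `k` is isolated in the configuration `ω`. -/
def Isolated {N : ℕ} (ω : EdgeIdx N → Bool) (k : Fin N) : Prop :=
  ∀ e : EdgeIdx N, (e.1.1 = k ∨ e.1.2 = k) → ω e = false

/-- The number of isolated super-vertices. -/
noncomputable def numIsolated {N : ℕ} (ω : EdgeIdx N → Bool) : ℕ :=
  (Finset.univ.filter fun k => Isolated ω k).card

/-- The simple graph on super-vertices determined by a configuration `ω`. -/
def toGraph {N : ℕ} (ω : EdgeIdx N → Bool) : SimpleGraph (Fin N) where
  Adj k l := ∃ e : EdgeIdx N, ω e = true ∧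
    ((e.1.1 = k ∧ e.1.2 = l) ∨ (e.1.1 = l ∧ e.1.2 = k))
  symm := by
    refine ⟨?_⟩
    intro k l h
    obtain ⟨e, he, hkl⟩ := h
    exact ⟨e, he, hkl.symm⟩
  loopless := by
    refine ⟨?_⟩
    intro k h
    obtain ⟨e, _, hkl⟩ := h
    have h2 := e.2
    rcases hkl with ⟨ha, hb⟩ | ⟨ha, hb⟩ <;> rw [ha, hb] at h2 <;> exact lt_irrefl _ h2

/-- The super-vertices of `A` form a connected component of the graph. -/
def IsComponentOn {N : ℕ} (ω : EdgeIdx N → Bool) (A : Finset (Fin N)) : Prop :=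
  ((toGraph ω).induce (A : Set (Fin N))).Connected ∧
  ∀ e : EdgeIdx N, ((e.1.1 ∈ A ∧ e.1.2 ∉ A) ∨ (e.1.1 ∉ A ∧ e.1.2 ∈ A)) → ω e = false

open Finset

section ParentMap

variable {α : Type*} [DecidableEq α]

/-- A spanning tree of `A` rooted at `a`, recorded by the parent of each non-root vertex. -/
structure IsParentMap (A : Finset α) (a : α) (f : α → α) : Prop where
  root_mem : a ∈ A
  mapsTo : ∀ v ∈ A, f v ∈ A
  exists_iterate_eq_root : ∀ v ∈ A, ∃ k, f^[k] v = a
  apply_eq_self : ∀ v ∉ A.erase a, f v = v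

def leaves (A : Finset α) (a : α) (f : α → α) : Finset α :=
  A.erase a \ (A.erase a).image f

namespace IsParentMap

variable {A : Finset α} {a : α} {f : α → α}

lemma apply_root (hf : IsParentMap A a f) : f a = a :=
  hf.apply_eq_self a (notMem_erase a A)

lemma apply_ne_self (hf : IsParentMap A a f) {v : α} (hv : v ∈ A.erase a) : f v ≠ v := by
  intro hfix
  obtain ⟨k, hk⟩ := hf.exists_iterate_eq_root v (mem_of_mem_erase hv)
  rw [Function.iterate_fixed hfix] at hk
  exact ne_of_mem_erase hv hk

lemma apply_apply_ne_self (hf : IsParentMap A a f) {v : α} (hv : v ∈ A.erase a) :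
    f (f v) ≠ v := by
  intro h2
  have hper : Function.IsPeriodicPt f 2 v := h2
  obtain ⟨k, hk⟩ := hf.exists_iterate_eq_root v (mem_of_mem_erase hv)
  rw [← hper.iterate_mod_apply] at hk
  rcases Nat.mod_two_eq_zero_or_one k with h | h <;> rw [h] at hk
  · exact ne_of_mem_erase hv hk
  · have hfv : f v = a := hk
    exact ne_of_mem_erase hv (by rw [← h2, hfv, hf.apply_root])

lemma of_potential (ha : a ∈ A) (hmaps : ∀ v ∈ A.erase a, f v ∈ A)
    (hself : ∀ v ∉ A.erase a, f v = v) (d : α → ℕ) (hd : ∀ v ∈ A.erase a, d (f v) < d v) :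
    IsParentMap A a f where
  root_mem := ha
  mapsTo v hv := by
    by_cases hva : v ∈ A.erase a
    · exact hmaps v hva
    · rwa [hself v hva]
  exists_iterate_eq_root v hv := by
    induction hdv : d v using Nat.strong_induction_on generalizing v with
    | _ n ih =>
      by_cases hva : v = a
      · exact ⟨0, hva⟩
      have hv' : v ∈ A.erase a := mem_erase.2 ⟨hva, hv⟩
      obtain ⟨k, hk⟩ := ih _ (hdv ▸ hd v hv') (f v) (hmaps v hv') rfl
      exact ⟨k + 1, hk⟩
  apply_eq_self := hself

lemma root_mem_image (hf : IsParentMap A a f) (hne : (A.erase a).Nonempty) :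
    a ∈ (A.erase a).image f := by
  obtain ⟨v, hv⟩ := hne
  obtain ⟨k, hk⟩ := hf.exists_iterate_eq_root v (mem_of_mem_erase hv)
  induction k generalizing v with
  | zero => exact absurd hk (ne_of_mem_erase hv)
  | succ k ih =>
    by_cases hfv : f v = a
    · exact mem_image.2 ⟨v, hv, hfv⟩
    · exact ih (f v) (mem_erase.2 ⟨hfv, hf.mapsTo v (mem_of_mem_erase hv)⟩) hk

lemma leaves_nonempty (hf : IsParentMap A a f) (h : 2 < #A) : (leaves A a f).Nonempty := by
  have hne : (A.erase a).Nonempty := by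
    rw [← card_pos, card_erase_of_mem hf.root_mem]; omega
  by_contra hempty
  rw [not_nonempty_iff_eq_empty, leaves, sdiff_eq_empty_iff_subset] at hempty
  -- then the image of the `#A - 1` non-root vertices would contain all of `A`
  have hA : A ⊆ (A.erase a).image f := fun v hv => by
    by_cases hva : v = a
    · exact hva ▸ hf.root_mem_image hne
    · exact hempty (mem_erase.2 ⟨hva, hv⟩)
  have := (card_le_card hA).trans card_image_le
  rw [card_erase_of_mem hf.root_mem] at this
  omega

lemma apply_eq_root_of_card_le_two (hf : IsParentMap A a f) (h : #A ≤ 2) {v : α}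
    (hv : v ∈ A.erase a) : f v = a := by
  by_contra hfv
  have hsub : {a, v, f v} ⊆ A := by
    simp only [insert_subset_iff, singleton_subset_iff]
    exact ⟨hf.root_mem, mem_of_mem_erase hv, hf.mapsTo v (mem_of_mem_erase hv)⟩
  have := card_le_card hsub
  rw [card_insert_of_notMem, card_pair (hf.apply_ne_self hv).symm] at this
  · omega
  · simp [Ne.symm hfv, (ne_of_mem_erase hv).symm]

lemma eraseLeaf (hf : IsParentMap A a f) {v : α} (hv : v ∈ leaves A a f) :
    IsParentMap (A.erase v) a (Function.update f v v) := by
  obtain ⟨hvA, hvleaf⟩ := mem_sdiff.1 hv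
  have hva : v ≠ a := ne_of_mem_erase hvA
  have hstay : ∀ w ∈ A.erase v, f w ∈ A.erase v := by
    intro w hw
    refine mem_erase.2 ⟨fun hfw => ?_, hf.mapsTo w (mem_of_mem_erase hw)⟩
    by_cases hwa : w = a
    · rw [hwa, hf.apply_root] at hfw; exact hva hfw.symm
    · exact hvleaf (mem_image.2 ⟨w, mem_erase.2 ⟨hwa, mem_of_mem_erase hw⟩, hfw⟩)
  have hiter : ∀ w ∈ A.erase v, ∀ k, (Function.update f v v)^[k] w = f^[k] w := by
    intro w hw k
    induction k generalizing w with
    | zero => rfl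
    | succ k ih =>
      rw [Function.iterate_succ_apply, Function.iterate_succ_apply,
        Function.update_of_ne (ne_of_mem_erase hw), ih _ (hstay w hw)]
  refine ⟨mem_erase.2 ⟨hva.symm, hf.root_mem⟩, fun w hw => ?_, fun w hw => ?_, fun w hw => ?_⟩
  · rw [Function.update_of_ne (ne_of_mem_erase hw)]; exact hstay w hw
  · obtain ⟨k, hk⟩ := hf.exists_iterate_eq_root w (mem_of_mem_erase hw)
    exact ⟨k, (hiter w hw k).trans hk⟩
  · by_cases hwv : w = v
    · rw [hwv, Function.update_self]
    · rw [Function.update_of_ne hwv]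
      refine hf.apply_eq_self w fun hw' => hw ?_
      rw [erase_right_comm]
      exact mem_erase.2 ⟨hwv, hw'⟩

end IsParentMap

end ParentMap

section Prufer

variable {α : Type*} [LinearOrder α]

noncomputable def prufer (A : Finset α) (a : α) (f : α → α) : List α :=
  if h : 2 < #A ∧ (leaves A a f).Nonempty then
    f ((leaves A a f).min' h.2) ::
      prufer (A.erase ((leaves A a f).min' h.2)) a
        (Function.update f ((leaves A a f).min' h.2) ((leaves A a f).min' h.2))
  else []
termination_by #A
decreasing_by
  exact card_erase_lt_of_mem (mem_of_mem_erase (mem_sdiff.1 (min'_mem _ h.2)).1)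

variable {A : Finset α} {a : α} {f : α → α}

lemma prufer_of_card_le_two (h : #A ≤ 2) : prufer A a f = [] := by
  rw [prufer, dif_neg (by omega)]

lemma IsParentMap.prufer_eq_cons (hf : IsParentMap A a f) (h : 2 < #A) :
    ∃ v, IsLeast (leaves A a f : Set α) v ∧
      prufer A a f = f v :: prufer (A.erase v) a (Function.update f v v) := by
  refine ⟨_, isLeast_min' _ (hf.leaves_nonempty h), ?_⟩
  rw [prufer, dif_pos ⟨h, hf.leaves_nonempty h⟩]

lemma erase_leaf_ssubset {v : α} (hv : v ∈ leaves A a f) : A.erase v ⊂ A :=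
  erase_ssubset (mem_of_mem_erase (mem_sdiff.1 hv).1)

lemma IsParentMap.length_prufer (hf : IsParentMap A a f) : (prufer A a f).length = #A - 2 := by
  induction A using Finset.strongInduction generalizing f with
  | H A ih =>
    rcases le_or_gt #A 2 with h | h
    · rw [prufer_of_card_le_two h, List.length_nil]; omega
    obtain ⟨v, hv, hcons⟩ := hf.prufer_eq_cons h
    rw [hcons, List.length_cons, ih _ (erase_leaf_ssubset hv.1) (hf.eraseLeaf hv.1),
      card_erase_of_mem (mem_of_mem_erase (mem_sdiff.1 hv.1).1)]
    omega

lemma IsParentMap.mem_of_mem_prufer (hf : IsParentMap A a f) {u : α} (hu : u ∈ prufer A a f) :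
    u ∈ A := by
  induction A using Finset.strongInduction generalizing f with
  | H A ih =>
    rcases le_or_gt #A 2 with h | h
    · simp [prufer_of_card_le_two h] at hu
    obtain ⟨v, hv, hcons⟩ := hf.prufer_eq_cons h
    rw [hcons, List.mem_cons] at hu
    rcases hu with rfl | hu
    · exact hf.mapsTo v (mem_of_mem_erase (mem_sdiff.1 hv.1).1)
    · exact mem_of_mem_erase (ih _ (erase_leaf_ssubset hv.1) (hf.eraseLeaf hv.1) hu)

lemma IsParentMap.mem_prufer_iff (hf : IsParentMap A a f) {u : α} (hu : u ∈ A.erase a) :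
    u ∈ prufer A a f ↔ u ∈ (A.erase a).image f := by
  induction A using Finset.strongInduction generalizing f with
  | H A ih =>
    rcases le_or_gt #A 2 with h | h
    · rw [prufer_of_card_le_two h, List.mem_nil_iff, false_iff, mem_image]
      rintro ⟨w, hw, rfl⟩
      exact ne_of_mem_erase hu (hf.apply_eq_root_of_card_le_two h hw)
    obtain ⟨v, hv, hcons⟩ := hf.prufer_eq_cons h
    obtain ⟨hvA, hvleaf⟩ := mem_sdiff.1 hv.1
    rw [hcons, List.mem_cons]
    by_cases huv : u = v
    · subst huv
      simp only [hvleaf, iff_false, not_or]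
      exact ⟨(hf.apply_ne_self hvA).symm,
        fun hmem => ne_of_mem_erase ((hf.eraseLeaf hv.1).mem_of_mem_prufer hmem) rfl⟩
    have hu' : u ∈ (A.erase v).erase a := by
      rw [erase_right_comm]; exact mem_erase.2 ⟨huv, hu⟩
    have himage : ((A.erase v).erase a).image (Function.update f v v)
        = ((A.erase a).erase v).image f := by
      rw [erase_right_comm]
      exact image_congr fun w hw => Function.update_of_ne (ne_of_mem_erase hw) _ _
    rw [ih _ (erase_leaf_ssubset hv.1) (hf.eraseLeaf hv.1) hu', himage,
      ← insert_erase hvA, image_insert, erase_insert_eq_erase, erase_idem, mem_insert, eq_comm]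

lemma IsParentMap.leaves_eq_filter_notMem_prufer (hf : IsParentMap A a f) :
    leaves A a f = (A.erase a).filter (· ∉ prufer A a f) := by
  ext u
  rw [leaves, Finset.mem_sdiff, mem_filter]
  exact and_congr_right fun hu => (hf.mem_prufer_iff hu).not.symm

lemma IsParentMap.eq_of_prufer_eq {f₁ f₂ : α → α} (hf₁ : IsParentMap A a f₁)
    (hf₂ : IsParentMap A a f₂) (hcode : prufer A a f₁ = prufer A a f₂) : f₁ = f₂ := by
  induction A using Finset.strongInduction generalizing f₁ f₂ with
  | H A ih =>
    rcases le_or_gt #A 2 with h | h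
    · funext w
      by_cases hw : w ∈ A.erase a
      · rw [hf₁.apply_eq_root_of_card_le_two h hw, hf₂.apply_eq_root_of_card_le_two h hw]
      · rw [hf₁.apply_eq_self w hw, hf₂.apply_eq_self w hw]
    obtain ⟨v, hv₁, hcons₁⟩ := hf₁.prufer_eq_cons h
    obtain ⟨w, hv₂, hcons₂⟩ := hf₂.prufer_eq_cons h
    obtain rfl : v = w := hv₁.unique <| by
      rwa [hf₁.leaves_eq_filter_notMem_prufer, hcode, ← hf₂.leaves_eq_filter_notMem_prufer]
    rw [hcons₁, hcons₂, List.cons.injEq] at hcode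
    have hrest := ih _ (erase_leaf_ssubset hv₁.1) (hf₁.eraseLeaf hv₁.1) (hf₂.eraseLeaf hv₂.1)
      hcode.2
    calc f₁ = Function.update (Function.update f₁ v v) v (f₁ v) := by
          rw [Function.update_idem, Function.update_eq_self]
      _ = Function.update (Function.update f₂ v v) v (f₂ v) := by rw [hrest, hcode.1]
      _ = f₂ := by rw [Function.update_idem, Function.update_eq_self]

lemma card_isParentMap_le [Fintype α] (A : Finset α) (a : α) :
    #{f | IsParentMap A a f} ≤ #A ^ (#A - 2) := by
  calc #{f | IsParentMap A a f}
      ≤ #(Fintype.piFinset fun _ : Fin (#A - 2) => A) := by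
        refine card_le_card_of_injOn (fun f i => (prufer A a f).getD i a) ?_ ?_
        · intro f hf
          replace hf := (mem_filter.1 hf).2
          refine Fintype.mem_piFinset.2 fun i => ?_
          change (prufer A a f).getD i a ∈ A
          rw [List.getD_eq_getElem _ _ (by rw [hf.length_prufer]; exact i.2)]
          exact hf.mem_of_mem_prufer (List.getElem_mem _)
        · intro f₁ hf₁ f₂ hf₂ heq
          replace hf₁ := (mem_filter.1 hf₁).2
          replace hf₂ := (mem_filter.1 hf₂).2
          refine hf₁.eq_of_prufer_eq hf₂ (List.ext_getElem ?_ fun i h₁ h₂ => ?_)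
          · rw [hf₁.length_prufer, hf₂.length_prufer]
          · have : (prufer A a f₁).getD i a = (prufer A a f₂).getD i a :=
              congrFun heq ⟨i, by rwa [hf₁.length_prufer] at h₁⟩
            rwa [List.getD_eq_getElem _ _ h₁, List.getD_eq_getElem _ _ h₂] at this
    _ = #A ^ (#A - 2) := by simp

end Prufer

lemma SimpleGraph.Reachable.exists_adj_dist_lt {V : Type*} {G : SimpleGraph V} {u w : V}
    (h : G.Reachable u w) (hne : u ≠ w) : ∃ u', G.Adj u u' ∧ G.dist u' w < G.dist u w := by
  obtain ⟨p, hp⟩ := h.exists_walk_length_eq_dist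
  cases p with
  | nil => exact absurd rfl hne
  | cons hadj q =>
    refine ⟨_, hadj, (SimpleGraph.dist_le q).trans_lt ?_⟩
    rw [← hp, SimpleGraph.Walk.length_cons]
    omega

lemma SimpleGraph.exists_isParentMap_of_connected_induce {α : Type*} [DecidableEq α]
    {G : SimpleGraph α} {A : Finset α} {a : α} (hG : (G.induce (A : Set α)).Connected)
    (ha : a ∈ A) : ∃ f, IsParentMap A a f ∧ ∀ v ∈ A.erase a, G.Adj v (f v) := by
  let d : α → ℕ := fun v =>
    if hv : v ∈ A then (G.induce (A : Set α)).dist ⟨v, hv⟩ ⟨a, ha⟩ else 0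
  have hstep : ∀ v ∈ A.erase a, ∃ u ∈ A, G.Adj v u ∧ d u < d v := by
    intro v hv
    have hvA := mem_of_mem_erase hv
    obtain ⟨⟨u, hu⟩, hadj, hlt⟩ := (hG.preconnected ⟨v, hvA⟩ ⟨a, ha⟩).exists_adj_dist_lt
      fun h => ne_of_mem_erase hv (congrArg Subtype.val h)
    exact ⟨u, hu, hadj, by simpa [d, mem_coe.1 hu, hvA] using hlt⟩
  choose! g hgA hgadj hglt using hstep
  refine ⟨fun v => if v ∈ A.erase a then g v else v,
    .of_potential ha (fun v hv => ?_) (fun v hv => ?_) d (fun v hv => ?_), fun v hv => ?_⟩ <;>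
    simp only [hv, if_true, if_false]
  exacts [hgA v hv, hglt v hv, hgadj v hv]

section Edges

variable {N : ℕ}

def EdgeIdx.ends (e : EdgeIdx N) : Sym2 (Fin N) := s(e.1.1, e.1.2)

lemma EdgeIdx.ends_injective : Function.Injective (EdgeIdx.ends (N := N)) := by
  rintro ⟨⟨x, y⟩, hxy⟩ ⟨⟨x', y'⟩, hxy'⟩ h
  rcases Sym2.eq_iff.1 h with ⟨rfl, rfl⟩ | ⟨rfl, rfl⟩
  · rfl
  · exact absurd (hxy.trans hxy') (lt_irrefl _)

def EdgeIdx.ofNe {x y : Fin N} (h : x ≠ y) : EdgeIdx N :=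
  if hlt : x < y then ⟨(x, y), hlt⟩ else ⟨(y, x), h.lt_or_gt.resolve_left hlt⟩

lemma EdgeIdx.ends_ofNe {x y : Fin N} (h : x ≠ y) : (EdgeIdx.ofNe h).ends = s(x, y) := by
  unfold EdgeIdx.ofNe
  split <;> simp [EdgeIdx.ends, Sym2.eq_swap]

lemma EdgeIdx.eq_ofNe_iff {e : EdgeIdx N} {x y : Fin N} (h : x ≠ y) :
    e = EdgeIdx.ofNe h ↔ e.ends = s(x, y) := by
  rw [← EdgeIdx.ends_ofNe h, EdgeIdx.ends_injective.eq_iff]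

lemma toGraph_adj_iff {ω : EdgeIdx N → Bool} {x y : Fin N} :
    (toGraph ω).Adj x y ↔ ∃ e, ω e = true ∧ e.ends = s(x, y) := by
  simp [toGraph, EdgeIdx.ends]

def IsTreeEdge (A : Finset (Fin N)) (a : Fin N) (f : Fin N → Fin N) (e : EdgeIdx N) : Prop :=
  ∃ v ∈ A.erase a, e.ends = s(v, f v)

def IsCrossEdge (A : Finset (Fin N)) (e : EdgeIdx N) : Prop :=
  (e.1.1 ∈ A ∧ e.1.2 ∉ A) ∨ (e.1.1 ∉ A ∧ e.1.2 ∈ A)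

variable {A : Finset (Fin N)} {a : Fin N} {f : Fin N → Fin N}

lemma IsParentMap.not_isCrossEdge (hf : IsParentMap A a f) {e : EdgeIdx N}
    (he : IsTreeEdge A a f e) : ¬ IsCrossEdge A e := by
  obtain ⟨v, hv, hends⟩ := he
  have hvA := mem_of_mem_erase hv
  have hfv := hf.mapsTo v hvA
  rcases Sym2.eq_iff.1 hends with ⟨h₁, h₂⟩ | ⟨h₁, h₂⟩ <;> simp [IsCrossEdge, h₁, h₂, hvA, hfv]

lemma IsParentMap.card_isTreeEdge (hf : IsParentMap A a f) :
    #{e | IsTreeEdge A a f e} = #A - 1 := by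
  rw [← card_erase_of_mem hf.root_mem]
  symm
  refine card_bij (fun v hv => EdgeIdx.ofNe (hf.apply_ne_self hv).symm) (fun v hv => ?_)
    (fun v hv w hw hvw => ?_) (fun e he => ?_)
  · exact mem_filter.2 ⟨mem_univ _, v, hv, EdgeIdx.ends_ofNe _⟩
  · rw [EdgeIdx.eq_ofNe_iff, EdgeIdx.ends_ofNe, Sym2.eq_iff] at hvw
    -- a second solution would be a cycle `v → w → v`
    rcases hvw with ⟨h, -⟩ | ⟨h, hfw⟩
    · exact h
    · exact absurd (by rw [← h, ← hfw]) (hf.apply_apply_ne_self hw)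
  · obtain ⟨v, hv, hends⟩ := (mem_filter.1 he).2
    exact ⟨v, hv, ((EdgeIdx.eq_ofNe_iff _).2 hends).symm⟩

lemma isCrossEdge_iff {e : EdgeIdx N} :
    IsCrossEdge A e ↔ ∃ x ∈ A, ∃ y ∉ A, e.ends = s(x, y) := by
  constructor
  · rintro (⟨h₁, h₂⟩ | ⟨h₁, h₂⟩)
    · exact ⟨_, h₁, _, h₂, rfl⟩
    · exact ⟨_, h₂, _, h₁, Sym2.eq_swap⟩
  · rintro ⟨x, hx, y, hy, hends⟩
    rcases Sym2.eq_iff.1 hends with ⟨rfl, rfl⟩ | ⟨rfl, rfl⟩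
    exacts [Or.inl ⟨hx, hy⟩, Or.inr ⟨hy, hx⟩]

lemma card_isCrossEdge (A : Finset (Fin N)) : #{e | IsCrossEdge A e} = #A * (N - #A) := by
  have hcard : #A * (N - #A) = #(A ×ˢ Aᶜ) := by
    rw [card_product, card_compl, Fintype.card_fin]
  have hne : ∀ q ∈ A ×ˢ Aᶜ, q.1 ≠ q.2 := fun q hq h =>
    mem_compl.1 (mem_product.1 hq).2 (h ▸ (mem_product.1 hq).1)
  rw [hcard]
  symm
  refine card_bij (fun q hq => EdgeIdx.ofNe (hne q hq)) (fun q hq => ?_)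
    (fun q hq q' hq' hqq' => ?_) (fun e he => ?_)
  · obtain ⟨hx, hy⟩ := mem_product.1 hq
    exact mem_filter.2 ⟨mem_univ _, isCrossEdge_iff.2
      ⟨_, hx, _, mem_compl.1 hy, EdgeIdx.ends_ofNe _⟩⟩
  · obtain ⟨hx, hy⟩ := mem_product.1 hq
    obtain ⟨hx', hy'⟩ := mem_product.1 hq'
    rw [EdgeIdx.eq_ofNe_iff, EdgeIdx.ends_ofNe, Sym2.eq_iff] at hqq'
    rcases hqq' with ⟨h₁, h₂⟩ | ⟨h₁, -⟩
    · exact Prod.ext h₁ h₂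
    · exact absurd (h₁ ▸ hx) (mem_compl.1 hy')
  · obtain ⟨x, hx, y, hy, hends⟩ := isCrossEdge_iff.1 (mem_filter.1 he).2
    exact ⟨(x, y), mem_product.2 ⟨hx, mem_compl.2 hy⟩, ((EdgeIdx.eq_ofNe_iff _).2 hends).symm⟩

end Edges

section TreeEvent

variable {N : ℕ} {A : Finset (Fin N)} {a : Fin N} {f : Fin N → Fin N}

def treeConstraint (A : Finset (Fin N)) (a : Fin N) (f : Fin N → Fin N) (e : EdgeIdx N) :
    Set Bool :=
  if IsTreeEdge A a f e then {true} else if IsCrossEdge A e then {false} else Set.univ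

def treeEvent (A : Finset (Fin N)) (a : Fin N) (f : Fin N → Fin N) : Set (EdgeIdx N → Bool) :=
  Set.univ.pi (treeConstraint A a f)

lemma setOf_isComponentOn_subset (ha : a ∈ A) :
    {ω | IsComponentOn ω A} ⊆ ⋃ f ∈ ({f | IsParentMap A a f} : Finset _), treeEvent A a f := by
  rintro ω ⟨hconn, hcross⟩
  obtain ⟨f, hf, hadj⟩ := SimpleGraph.exists_isParentMap_of_connected_induce hconn ha
  refine Set.mem_iUnion₂.2 ⟨f, mem_filter.2 ⟨mem_univ _, hf⟩, fun e _ => ?_⟩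
  rw [treeConstraint]
  split_ifs with htree hcr
  · obtain ⟨v, hv, hends⟩ := htree
    obtain ⟨e', he', hends'⟩ := toGraph_adj_iff.1 (hadj v hv)
    rwa [EdgeIdx.ends_injective (hends.trans hends'.symm)]
  · exact hcross e hcr
  · trivial

end TreeEvent

lemma ENNReal.one_sub_one_sub_pow_le (q : ℝ≥0∞) (n : ℕ) : 1 - (1 - q) ^ n ≤ n * q := by
  induction n with
  | zero => simp
  | succ n ih =>
    have hstep : (1 - q) ^ n ≤ (1 - q) ^ (n + 1) + q :=
      calc (1 - q) ^ n ≤ (1 - q) ^ n * (1 - q + q) := le_mul_of_one_le_right' le_tsub_add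
        _ = (1 - q) ^ (n + 1) + (1 - q) ^ n * q := by rw [mul_add, pow_succ]
        _ ≤ (1 - q) ^ (n + 1) + q := by
          gcongr; exact mul_le_of_le_one_left' (pow_le_one₀ zero_le tsub_le_self)
    rw [tsub_le_iff_right] at ih ⊢
    calc 1 ≤ n * q + (1 - q) ^ n := ih
      _ ≤ n * q + ((1 - q) ^ (n + 1) + q) := by gcongr
      _ = (n + 1 : ℕ) * q + (1 - q) ^ (n + 1) := by push_cast; ring

lemma ENNReal.ofReal_pow_le (x : ℝ) (n : ℕ) : ENNReal.ofReal x ^ n ≤ ENNReal.ofReal (x ^ n) := by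
  rcases le_total 0 x with hx | hx
  · rw [ENNReal.ofReal_pow hx]
  rcases n with _ | n
  · simp
  · rw [ENNReal.ofReal_of_nonpos hx, zero_pow n.succ_ne_zero]
    exact zero_le

noncomputable abbrev edgeLaw (p : ℝ) (n : ℕ) : Measure Bool :=
  (PMF.bernoulli (1 - (1 - ENNReal.ofReal p) ^ n).toNNReal (by simp)).toMeasure

lemma edgeLaw_true_le (p : ℝ) (n : ℕ) : edgeLaw p n {true} ≤ n * ENNReal.ofReal p := by
  rw [PMF.toMeasure_apply_singleton _ _ (measurableSet_singleton _), PMF.bernoulli_apply,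
    cond_true, ENNReal.coe_toNNReal (ne_top_of_le_ne_top ENNReal.one_ne_top tsub_le_self)]
  exact ENNReal.one_sub_one_sub_pow_le _ n

lemma edgeLaw_false_le (p : ℝ) {n : ℕ} (hn : n ≠ 0) :
    edgeLaw p n {false} ≤ ENNReal.ofReal (Real.exp (-p)) := by
  have hq : (1 - ENNReal.ofReal p) ^ n ≤ 1 := pow_le_one₀ zero_le tsub_le_self
  rw [PMF.toMeasure_apply_singleton _ _ (measurableSet_singleton _), PMF.bernoulli_apply,
    cond_false, ENNReal.coe_sub, ENNReal.coe_one,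
    ENNReal.coe_toNNReal (ne_top_of_le_ne_top ENNReal.one_ne_top tsub_le_self),
    ENNReal.sub_sub_cancel ENNReal.one_ne_top hq]
  refine (pow_le_of_le_one zero_le tsub_le_self hn).trans (tsub_le_iff_right.2 ?_)
  calc (1 : ℝ≥0∞) = ENNReal.ofReal 1 := ENNReal.ofReal_one.symm
    _ ≤ ENNReal.ofReal (Real.exp (-p) + p) := by
        gcongr; linarith [Real.add_one_le_exp (-p)]
    _ ≤ ENNReal.ofReal (Real.exp (-p)) + ENNReal.ofReal p := ENNReal.ofReal_add_le

instance {N : ℕ} (size : Fin N → ℕ) (p : ℝ) : IsProbabilityMeasure (graphMeasure N size p) := by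
  unfold graphMeasure; infer_instance

lemma graphMeasure_treeEvent_le {N r : ℕ} {size : Fin N → ℕ} (p : ℝ)
    (hrange : ∀ v, size v ∈ Finset.Icc 1 r) {A : Finset (Fin N)} {a : Fin N}
    {f : Fin N → Fin N} (hf : IsParentMap A a f) :
    graphMeasure N size p (treeEvent A a f) ≤
      ((r : ℝ≥0∞) ^ 2 * ENNReal.ofReal p) ^ (#A - 1) *
        ENNReal.ofReal (Real.exp (-p)) ^ (#A * (N - #A)) := by
  set x := (r : ℝ≥0∞) ^ 2 * ENNReal.ofReal p
  set y := ENNReal.ofReal (Real.exp (-p))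
  have hedge : ∀ e : EdgeIdx N,
      edgeLaw p (size e.1.1 * size e.1.2) (treeConstraint A a f e)
        ≤ (if IsTreeEdge A a f e then x else 1) * (if IsCrossEdge A e then y else 1) := by
    intro e
    obtain ⟨h₁, h₁r⟩ := mem_Icc.1 (hrange e.1.1)
    obtain ⟨h₂, h₂r⟩ := mem_Icc.1 (hrange e.1.2)
    by_cases htree : IsTreeEdge A a f e
    · rw [treeConstraint, if_pos htree, if_pos htree, if_neg (hf.not_isCrossEdge htree), mul_one]
      have hsize : ((size e.1.1 * size e.1.2 : ℕ) : ℝ≥0∞) ≤ (r : ℝ≥0∞) ^ 2 := by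
        exact_mod_cast sq r ▸ Nat.mul_le_mul h₁r h₂r
      exact (edgeLaw_true_le p _).trans (mul_le_mul_left hsize _)
    by_cases hcr : IsCrossEdge A e
    · rw [treeConstraint, if_neg htree, if_neg htree, if_pos hcr, if_pos hcr, one_mul]
      exact edgeLaw_false_le p (Nat.mul_ne_zero (by omega) (by omega))
    · rw [treeConstraint, if_neg htree, if_neg htree, if_neg hcr, if_neg hcr, one_mul]
      exact prob_le_one
  calc graphMeasure N size p (treeEvent A a f)
      = ∏ e, edgeLaw p (size e.1.1 * size e.1.2) (treeConstraint A a f e) :=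
        Measure.pi_pi _ _
    _ ≤ ∏ e, (if IsTreeEdge A a f e then x else 1) * (if IsCrossEdge A e then y else 1) :=
        prod_le_prod' fun e _ => hedge e
    _ = x ^ (#A - 1) * y ^ (#A * (N - #A)) := by
        rw [prod_mul_distrib, ← prod_filter, ← prod_filter, prod_const, prod_const,
          hf.card_isTreeEdge, card_isCrossEdge]

lemma component_bound_le_ofReal {N m r : ℕ} (p : ℝ) (hm : m ≤ N) :
    (m : ℝ≥0∞) ^ (m - 2) * (((r : ℝ≥0∞) ^ 2 * ENNReal.ofReal p) ^ (m - 1) *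
        ENNReal.ofReal (Real.exp (-p)) ^ (m * (N - m))) ≤
      ENNReal.ofReal ((m : ℝ) ^ (m - 2) * ((r : ℝ) ^ 2 * p) ^ (m - 1) *
        Real.exp (-p * m * (N - m))) := by
  have hexp : Real.exp (-p * m * (N - m)) = Real.exp (-p) ^ (m * (N - m)) := by
    rw [← Real.exp_nat_mul, Nat.cast_mul, Nat.cast_sub hm]
    ring_nf
  have hx : (r : ℝ≥0∞) ^ 2 * ENNReal.ofReal p = ENNReal.ofReal ((r : ℝ) ^ 2 * p) := by
    rw [ENNReal.ofReal_mul (by positivity), ENNReal.ofReal_pow (Nat.cast_nonneg _),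
      ENNReal.ofReal_natCast]
  rw [ENNReal.ofReal_mul' (Real.exp_nonneg _), ENNReal.ofReal_mul (by positivity),
    ENNReal.ofReal_pow (Nat.cast_nonneg _), ENNReal.ofReal_natCast, hexp,
    ENNReal.ofReal_pow (Real.exp_nonneg _), hx, mul_assoc]
  gcongr
  exact ENNReal.ofReal_pow_le _ _

theorem prob_component_le_general (N r : ℕ) (size : Fin N → ℕ) (p : ℝ)
    (hrange : ∀ v, size v ∈ Finset.Icc 1 r)
    (A : Finset (Fin N)) (m : ℕ) (hm : A.card = m) :
    graphMeasure N size p {ω | IsComponentOn ω A} ≤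
      ENNReal.ofReal ((m : ℝ) ^ (m - 2) * ((r : ℝ) ^ 2 * p) ^ (m - 1) *
        Real.exp (-p * m * (N - m))) := by
  subst hm
  rcases A.eq_empty_or_nonempty with rfl | ⟨a, ha⟩
  · simpa using prob_le_one
  set bound := ((r : ℝ≥0∞) ^ 2 * ENNReal.ofReal p) ^ (#A - 1) *
    ENNReal.ofReal (Real.exp (-p)) ^ (#A * (N - #A))
  calc graphMeasure N size p {ω | IsComponentOn ω A}
      ≤ ∑ f ∈ {f | IsParentMap A a f}, graphMeasure N size p (treeEvent A a f) :=
        (measure_mono (setOf_isComponentOn_subset ha)).trans (measure_biUnion_finset_le _ _)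
    _ ≤ #{f | IsParentMap A a f} * bound := by
        rw [← nsmul_eq_mul, ← sum_const]
        exact sum_le_sum fun f hf => graphMeasure_treeEvent_le p hrange (mem_filter.1 hf).2
    _ ≤ #A ^ (#A - 2) * bound := by
        gcongr
        exact_mod_cast card_isParentMap_le A a
    _ ≤ _ := component_bound_le_ofReal p (card_le_univ A |>.trans_eq (Fintype.card_fin N))

/-- in `G(N,K,p)` with all super-vertex sizes at most `r`, the probability
that a fixed set `A` of `m` super-vertices forms a connected component is at most
`m^(m-2) (r²p)^(m-1) e^(-p m (N-m))`. -/
theorem prob_component_le (N r : ℕ) (size : Fin N → ℕ) (p : ℝ) (hp0 : 0 < p) (hp1 : p < 1)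
    (hrange : ∀ v, size v ∈ Finset.Icc 1 r)
    (A : Finset (Fin N)) (m : ℕ) (hm : A.card = m) :
    graphMeasure N size p {ω | IsComponentOn ω A} ≤
      ENNReal.ofReal ((m : ℝ) ^ (m - 2) * ((r : ℝ) ^ 2 * p) ^ (m - 1) *
        Real.exp (-p * m * (N - m))) :=
  prob_component_le_general N r size p hrange A m hm
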